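/- For all integers n, k, i, j with 1 ≤ k ≤ n: summing the count c(n,n−j) · S(n−j,k) · c(k,k−i) of ordered partitions of [n] into k nonempty lists with nsb = i and nse = j over all 0 ≤ i ≤ k−1 and 0 ≤ j ≤ n−k yields ∑_{j=0}^{n−k} ∑_{i=0}^{k−1} c(n,n−j) · S(n−j,k) · c(k,k−i) = n! · C(n−1,k−1). -/

import Mathlib

open Finset

/-- The number of cycles (including fixed points) of a permutation of `Fin n`. -/
noncomputable def cycleCount {n : ℕ} (σ : Equiv.Perm (Fin n)) : ℕ :=
  σ.cycleType.card + (Finset.univ.filter fun x => σ x = x).card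

/-- The unsigned Stirling number of the first kind `c(n,k)`: the number of
permutations of an `n`-element set with exactly `k` cycles. -/
noncomputable def stirlingFirst (n k : ℕ) : ℕ :=
  Set.ncard {σ : Equiv.Perm (Fin n) | cycleCount σ = k}

/-- The signed Stirling number of the first kind `s(n,k) = (-1)^(n-k) c(n,k)`. -/
noncomputable def stirlingFirstSigned (n k : ℕ) : ℤ :=
  (-1) ^ (n - k) * (stirlingFirst n k : ℤ)

/-- `P` is an (unordered) partition of `Fin n` into nonempty blocks. -/
def IsPartitionOf (n : ℕ) (P : Finset (Finset (Fin n))) : Prop :=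
  (∀ b ∈ P, b.Nonempty) ∧ (∀ b ∈ P, ∀ c ∈ P, b ≠ c → Disjoint b c) ∧
    ∀ x : Fin n, ∃ b ∈ P, x ∈ b

/-- The Stirling number of the second kind `S(n,k)`: the number of partitions of an
`n`-element set into exactly `k` nonempty blocks. -/
noncomputable def stirlingSecond (n k : ℕ) : ℕ :=
  Set.ncard {P : Finset (Finset (Fin n)) | IsPartitionOf n P ∧ P.card = k}

/-- The Bell number `B n`: the number of partitions of an `n`-element set into
nonempty blocks. -/
noncomputable def bell (n : ℕ) : ℕ :=
  Set.ncard {P : Finset (Finset (Fin n)) | IsPartitionOf n P}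

/-- The statistic `nse` of a list: the number of positions `j` such that some later
entry is smaller than the entry at position `j`. -/
def nseList {α : Type*} [LinearOrder α] : List α → ℕ
  | [] => 0
  | a :: w => (if ∃ b ∈ w, b < a then 1 else 0) + nseList w

/-- `B` is an ordered set partition ("list of sets") of `Fin n` into `k` pairwise
disjoint nonempty blocks. -/
def IsOrderedSetPartition (n k : ℕ) (B : Fin k → Finset (Fin n)) : Prop :=
  (∀ j, (B j).Nonempty) ∧ (∀ j l, j ≠ l → Disjoint (B j) (B l)) ∧
    ∀ x : Fin n, ∃ j, x ∈ B j

/-- The statistic `nsb` of an ordered set partition: the number of indices `j`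
such that `min (B j) > min (B l)` for some `l > j`. -/
def nsbOSP {n k : ℕ} (B : Fin k → Finset (Fin n)) : ℕ :=
  (Finset.univ.filter fun j : Fin k => ∃ l, j < l ∧ (B l).min < (B j).min).card

/-- `P` is a "set of lists" partition of `Fin n`: an unordered collection of nonempty
sequences of distinct elements, with pairwise disjoint underlying sets covering `Fin n`. -/
def IsSetOfLists (n : ℕ) (P : Finset (List (Fin n))) : Prop :=
  (∀ w ∈ P, w ≠ []) ∧ (∀ w ∈ P, w.Nodup) ∧
    (∀ w ∈ P, ∀ u ∈ P, w ≠ u → ∀ x ∈ w, x ∉ u) ∧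
    ∀ x : Fin n, ∃ w ∈ P, x ∈ w

/-- The statistic `nse` of a set of lists: the sum of `nseList` over its blocks. -/
def nseSL {n : ℕ} (P : Finset (List (Fin n))) : ℕ := ∑ w ∈ P, nseList w

/-- `L` is a "list of lists" partition of `Fin n` into `k` blocks: a sequence of `k`
nonempty sequences of distinct elements, with pairwise disjoint underlying sets
covering `Fin n`. -/
def IsListOfLists (n k : ℕ) (L : Fin k → List (Fin n)) : Prop :=
  (∀ j, L j ≠ []) ∧ (∀ j, (L j).Nodup) ∧
    (∀ j l, j ≠ l → ∀ x ∈ L j, x ∉ L l) ∧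
    ∀ x : Fin n, ∃ j, x ∈ L j

/-- The statistic `nse` of a list of lists: the sum of `nseList` over its blocks. -/
def nseLL {n k : ℕ} (L : Fin k → List (Fin n)) : ℕ := ∑ j, nseList (L j)

/-- The statistic `nsb` of a list of lists: the number of indices `j` such that
`min (L j) > min (L l)` for some `l > j`. -/
def nsbLL {n k : ℕ} (L : Fin k → List (Fin n)) : ℕ :=
  (Finset.univ.filter fun j : Fin k => ∃ l, j < l ∧ (L l).minimum < (L j).minimum).card


/-! The inner sum is `∑ᵢ c(k,k-i) = k!`, and `S(m,k) k!` counts the surjections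
`[m] → [k]`. Grouping the permutations `σ` of `[n]` by their number of cycles, the left-hand
side therefore counts the pairs `(σ, f)` where `f : [n] → [k]` is a surjection constant on the
cycles of `σ`, i.e. `f ∘ σ = f`. By Burnside's lemma for `Perm [n]` acting on surjections by
precomposition, this is `n!` times the number of orbits. An orbit is determined by the sizes of
the fibres of its members, so orbits correspond to compositions of `n` into `k` positive parts,
of which there are `C(n-1,k-1)`. -/

open Equiv Function MulAction
open scoped Nat

section SetPartitions

variable {m : ℕ} {β : Type*} [Fintype β] [DecidableEq β]

def fiberPartition (f : Fin m → β) : Finset (Finset (Fin m)) :=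
  univ.image fun j => ({x | f x = j} : Finset (Fin m))

lemma isPartitionOf_fiberPartition {f : Fin m → β} (hf : Surjective f) :
    IsPartitionOf m (fiberPartition f) := by
  refine ⟨?_, ?_, fun x => ⟨_, mem_image_of_mem _ (mem_univ (f x)), by simp⟩⟩
  · simp only [fiberPartition, mem_image, mem_univ, true_and, forall_exists_index]
    rintro _ j rfl
    obtain ⟨x, rfl⟩ := hf j
    exact ⟨x, by simp⟩
  · simp only [fiberPartition, mem_image, mem_univ, true_and]
    rintro _ ⟨i, rfl⟩ _ ⟨j, rfl⟩ hij
    exact disjoint_filter.mpr fun x _ hi hj => hij (by rw [← hi, ← hj])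

noncomputable def equivFiberPartition {f : Fin m → β} (hf : Surjective f) :
    β ≃ fiberPartition f := by
  refine .ofBijective (fun j => ⟨({x | f x = j} : Finset _), mem_image_of_mem _ (mem_univ j)⟩)
    ⟨fun i j hij => ?_, fun ⟨b, hb⟩ => ?_⟩
  · obtain ⟨x, rfl⟩ := hf i
    simpa using (Finset.ext_iff.mp (congrArg Subtype.val hij) x).mp (by simp)
  · obtain ⟨j, -, rfl⟩ := mem_image.mp hb
    exact ⟨j, rfl⟩

lemma mem_equivFiberPartition_apply {f : Fin m → β} (hf : Surjective f) (x : Fin m) :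
    x ∈ (equivFiberPartition hf (f x)).1 :=
  mem_filter.mpr ⟨mem_univ x, rfl⟩

lemma card_fiberPartition {f : Fin m → β} (hf : Surjective f) :
    #(fiberPartition f) = Fintype.card β := by
  simpa using (Fintype.card_congr (equivFiberPartition hf)).symm

namespace IsPartitionOf

variable {P : Finset (Finset (Fin m))}

lemma existsUnique_mem (hP : IsPartitionOf m P) (x : Fin m) : ∃! b, b ∈ P ∧ x ∈ b := by
  obtain ⟨b, hb, hxb⟩ := hP.2.2 x
  exact ⟨b, ⟨hb, hxb⟩, fun c ⟨hc, hxc⟩ => by_contra fun hcb =>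
    disjoint_left.mp (hP.2.1 c hc b hb hcb) hxc hxb⟩

variable (hP : IsPartitionOf m P)

noncomputable def blockOf (x : Fin m) : P :=
  ⟨P.choose (x ∈ ·) (hP.existsUnique_mem x), P.choose_mem _ _⟩

lemma mem_iff_blockOf_eq {x : Fin m} {b : P} : x ∈ b.1 ↔ hP.blockOf x = b :=
  ⟨fun hx => Subtype.ext ((hP.existsUnique_mem x).unique
    ⟨P.choose_mem _ _, P.choose_property (x ∈ ·) _⟩ ⟨b.2, hx⟩),
    fun h => h ▸ P.choose_property (x ∈ ·) _⟩

lemma blockOf_surjective : Surjective hP.blockOf := fun b =>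
  (hP.1 b b.2).imp fun _ hx => (hP.mem_iff_blockOf_eq).mp hx

lemma fiberPartition_comp_blockOf (e : P ≃ β) : fiberPartition (e ∘ hP.blockOf) = P := by
  have fiber (j : β) : ({x | e (hP.blockOf x) = j} : Finset (Fin m)) = (e.symm j).1 := by
    ext x
    simp [hP.mem_iff_blockOf_eq, eq_symm_apply]
  ext b
  simp only [fiberPartition, comp_apply, fiber, mem_image, mem_univ, true_and]
  exact ⟨by rintro ⟨j, rfl⟩; exact (e.symm j).2, fun hb => ⟨e ⟨b, hb⟩, by simp⟩⟩

noncomputable def labellingEquiv :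
    (P ≃ β) ≃ {f : Fin m → β // Surjective f ∧ fiberPartition f = P} := by
  refine .ofBijective (fun e => ⟨e ∘ hP.blockOf, e.surjective.comp hP.blockOf_surjective,
    hP.fiberPartition_comp_blockOf e⟩) ⟨fun e e' h => ?_, ?_⟩
  · exact Equiv.ext (hP.blockOf_surjective.forall.mpr (congrFun (congrArg Subtype.val h)))
  · rintro ⟨f, hf, rfl⟩
    refine ⟨(equivFiberPartition hf).symm, Subtype.ext (funext fun x => ?_)⟩
    exact (equivFiberPartition hf).symm_apply_eq.mpr
      ((hP.mem_iff_blockOf_eq).mp (mem_equivFiberPartition_apply hf x))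

end IsPartitionOf

end SetPartitions

lemma card_surjective_fin (m : ℕ) (β : Type*) [Fintype β] :
    Nat.card {f : Fin m → β // Surjective f} =
      stirlingSecond m (Fintype.card β) * (Fintype.card β)! := by
  classical
  have maps : ∀ f ∈ univ.filter (Surjective : (Fin m → β) → Prop),
      fiberPartition f ∈ univ.filter fun P => IsPartitionOf m P ∧ #P = Fintype.card β :=
    fun f hf => by
      have hf := (mem_filter.mp hf).2
      simpa using ⟨isPartitionOf_fiberPartition hf, card_fiberPartition hf⟩
  rw [stirlingSecond, Set.ncard_eq_toFinset_card', Set.toFinset_ofPred, Nat.card_eq_fintype_card,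
    Fintype.card_subtype, card_eq_sum_card_fiberwise maps]
  refine sum_const_nat fun P hP => ?_
  obtain ⟨hP, hcard⟩ := (mem_filter.mp hP).2
  rw [filter_filter, ← Fintype.card_subtype, ← Fintype.card_congr hP.labellingEquiv,
    Fintype.card_equiv (Fintype.equivOfCardEq (by simp [hcard])), Fintype.card_coe, hcard]

lemma card_surjective (α β : Type*) [Finite α] [Fintype β] :
    Nat.card {f : α → β // Surjective f} =
      stirlingSecond (Nat.card α) (Fintype.card β) * (Fintype.card β)! := by
  rw [← card_surjective_fin]
  exact Nat.card_congr ((arrowCongr (Finite.equivFin α) (.refl β)).subtypeEquiv fun f =>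
    ((Finite.equivFin α).symm.surjective.of_comp_iff f).symm)

lemma stirlingSecond_eq_zero_of_lt {m k : ℕ} (h : m < k) : stirlingSecond m k = 0 := by
  have hsurj := card_surjective_fin m (Fin k)
  rw [Fintype.card_fin, Nat.card_eq_zero.mpr (.inl ⟨fun f =>
    (Fintype.card_le_of_surjective f.1 f.2).not_gt (by simpa using h)⟩)] at hsurj
  exact (Nat.mul_eq_zero.mp hsurj.symm).resolve_right k.factorial_ne_zero

namespace Equiv.Perm

variable {α β : Type*}

/-- The permutations `τ` with `f ∘ τ = f` form a subgroup: the stabilizer of `f` for the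
action of `(Perm α)ᵈᵐᵃ` by precomposition. -/
lemma comp_zpow_eq_self {σ : Perm α} {f : α → β} (h : f ∘ σ = f) (i : ℤ) :
    f ∘ ⇑(σ ^ i) = f :=
  DomMulAct.mem_stabilizer_iff.mp <| zpow_mem (DomMulAct.mem_stabilizer_iff.mpr h) i

lemma comp_eq_self_iff_sameCycle_le_ker {σ : Perm α} {f : α → β} :
    f ∘ σ = f ↔ SameCycle.setoid σ ≤ Setoid.ker f := by
  refine ⟨fun h x y ⟨i, hi⟩ => ?_, fun h => funext fun x =>
    (h (SameCycle.refl σ x).apply_right).symm⟩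
  rw [← hi]
  exact (congrFun (comp_zpow_eq_self h i) x).symm

noncomputable def invariantSurjectiveEquiv (σ : Perm α) :
    {f : α → β // Surjective f ∧ f ∘ σ = f} ≃
      {g : Quotient (SameCycle.setoid σ) → β // Surjective g} :=
  ((subtypeEquivRight fun _ =>
      and_comm.trans (and_congr_left' comp_eq_self_iff_sameCycle_le_ker)).trans
    (subtypeSubtypeEquivSubtypeInter _ _).symm).trans
    ((Setoid.liftEquiv _).subtypeEquiv fun f => (Quotient.lift_surjective_iff _ f.2).symm)

variable [Fintype α] [DecidableEq α] (σ : Perm α)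

def cycleOrFixedPoint (x : α) : σ.cycleFactorsFinset ⊕ {x // σ x = x} :=
  if h : σ x = x then .inr ⟨x, h⟩
  else .inl ⟨σ.cycleOf x, cycleOf_mem_cycleFactorsFinset_iff.mpr (mem_support.mpr h)⟩

lemma cycleOrFixedPoint_eq_iff {x y : α} :
    cycleOrFixedPoint σ x = cycleOrFixedPoint σ y ↔ σ.SameCycle x y := by
  by_cases hx : σ x = x <;> by_cases hy : σ y = y <;>
    simp only [cycleOrFixedPoint, hx, hy, dif_pos, dif_neg, not_false_eq_true, Sum.inr.injEq,
      Sum.inl.injEq, reduceCtorEq, false_iff, Subtype.mk.injEq]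
  · exact ⟨fun h => h ▸ SameCycle.refl σ x, fun h => h.eq_of_left hx⟩
  · exact fun h => hy (h.apply_eq_self_iff.mp hx)
  · exact fun h => hx (h.apply_eq_self_iff.mpr hy)
  · exact (sameCycle_iff_cycleOf_eq_of_mem_support (mem_support.mpr hx)
      (mem_support.mpr hy)).symm

lemma cycleOrFixedPoint_surjective : Surjective (cycleOrFixedPoint σ) := by
  rintro (⟨c, hc⟩ | ⟨x, hx⟩)
  · obtain ⟨x, hx⟩ := (mem_cycleFactorsFinset_iff.mp hc).1.nonempty_support
    have hσx : σ x ≠ x := mem_support.mp (mem_cycleFactorsFinset_support_le hc hx)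
    exact ⟨x, by simp [cycleOrFixedPoint, hσx, cycle_is_cycleOf hx hc]⟩
  · exact ⟨x, by simp [cycleOrFixedPoint, hx]⟩

lemma card_quotient_sameCycle :
    Nat.card (Quotient (SameCycle.setoid σ)) = σ.cycleType.card + #{x | σ x = x} := by
  have hker : Setoid.ker (cycleOrFixedPoint σ) = SameCycle.setoid σ :=
    Setoid.ext fun _ _ => cycleOrFixedPoint_eq_iff σ
  rw [← hker, Nat.card_congr (Setoid.quotientKerEquivOfSurjective _
      (cycleOrFixedPoint_surjective σ)),
    Nat.card_sum, cycleType_def, Multiset.card_map, Nat.card_eq_fintype_card,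
    Fintype.card_coe, Nat.card_eq_fintype_card, Fintype.card_subtype]
  rfl

end Equiv.Perm

lemma sum_range_sub_eq_sum_range {M : Type*} [AddCommMonoid M] {n k : ℕ} (hkn : k ≤ n)
    (g : ℕ → M) (hg : ∀ m < k, g m = 0) :
    ∑ j ∈ range (n - k + 1), g (n - j) = ∑ m ∈ range (n + 1), g m := by
  rw [← sum_range_reflect g]
  refine sum_subset (range_subset_range.mpr (by omega)) fun j hj hj' => ?_
  simp only [mem_range] at hj hj'
  simpa using hg (n - j) (by omega)

section StirlingFirst

variable {n : ℕ}

lemma cycleCount_eq_card_quotient (σ : Perm (Fin n)) :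
    cycleCount σ = Nat.card (Quotient (Perm.SameCycle.setoid σ)) :=
  (Perm.card_quotient_sameCycle σ).symm

lemma cycleCount_le (σ : Perm (Fin n)) : cycleCount σ ≤ n := by
  rw [cycleCount_eq_card_quotient]
  exact (Nat.card_le_card_of_surjective _ Quotient.mk_surjective).trans_eq (Nat.card_fin n)

lemma cycleCount_pos [NeZero n] (σ : Perm (Fin n)) : 0 < cycleCount σ := by
  rw [cycleCount_eq_card_quotient]
  exact Finite.card_pos

lemma sum_stirlingFirst_mul (g : ℕ → ℕ) :
    ∑ m ∈ range (n + 1), stirlingFirst n m * g m =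
      ∑ σ : Perm (Fin n), g (cycleCount σ) := by
  classical
  rw [← sum_fiberwise_of_maps_to fun σ _ => mem_range.2 (Nat.lt_succ_of_le (cycleCount_le σ))]
  refine sum_congr rfl fun m _ => ?_
  rw [stirlingFirst, Set.ncard_eq_toFinset_card', Set.toFinset_ofPred,
    sum_congr rfl fun σ hσ => by rw [(mem_filter.mp hσ).2], sum_const, smul_eq_mul]

lemma sum_stirlingFirst : ∑ m ∈ range (n + 1), stirlingFirst n m = n ! := by
  simpa [Fintype.card_perm] using sum_stirlingFirst_mul (n := n) fun _ => 1

lemma stirlingFirst_zero_right [NeZero n] : stirlingFirst n 0 = 0 :=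
  (Set.ncard_eq_zero).mpr (Set.eq_empty_of_forall_notMem fun σ hσ =>
    (cycleCount_pos σ).ne' hσ)

lemma sum_range_stirlingFirst_sub [NeZero n] :
    ∑ i ∈ range n, stirlingFirst n (n - i) = n ! := by
  have hn : 1 ≤ n := NeZero.one_le
  have := sum_range_sub_eq_sum_range hn (stirlingFirst n) fun m hm => by
    rw [Nat.lt_one_iff.mp hm, stirlingFirst_zero_right]
  rwa [Nat.sub_add_cancel hn, sum_stirlingFirst] at this

end StirlingFirst

section FiberCard

variable {α ι : Type*}

noncomputable def fiberCard (f : α → ι) (i : ι) : ℕ := Nat.card {a // f a = i}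

lemma fiberCard_comp_perm (f : α → ι) (σ : Perm α) : fiberCard (f ∘ σ) = fiberCard f :=
  funext fun _ => Nat.card_congr (σ.subtypeEquiv fun _ => Iff.rfl)

lemma exists_perm_comp_eq_of_fiberCard_eq [Finite α] {f g : α → ι}
    (h : fiberCard f = fiberCard g) : ∃ σ : Perm α, g ∘ σ = f :=
  ⟨ofFiberEquiv fun i => (Finite.card_eq.mp (congrFun h i)).some,
    funext (ofFiberEquiv_map _)⟩

lemma sum_fiberCard [Fintype ι] [Finite α] (f : α → ι) :
    ∑ i, fiberCard f i = Nat.card α := by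
  simp only [fiberCard]
  rw [← Nat.card_sigma, Nat.card_congr (sigmaFiberEquiv f)]

lemma surjective_iff_forall_fiberCard_pos [Finite α] {f : α → ι} :
    Surjective f ↔ ∀ i, 0 < fiberCard f i := by
  simp only [fiberCard, Finite.card_pos_iff, nonempty_subtype, Surjective]

lemma exists_fiberCard_eq [Fintype ι] [Finite α] (a : ι → ℕ)
    (ha : ∑ i, a i = Nat.card α) :
    ∃ f : α → ι, fiberCard f = a := by
  obtain ⟨e⟩ : Nonempty (α ≃ Σ i, Fin (a i)) := Finite.card_eq.mp (by simp [ha])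
  exact ⟨fun x => (e x).1, funext fun i =>
    (Nat.card_congr ((e.subtypeEquiv fun _ => Iff.rfl).trans (sigmaSubtype i))).trans
      (Nat.card_eq_fintype_card.trans (Fintype.card_fin _))⟩

end FiberCard

section Burnside

variable (α ι : Type*)

def surjectiveFunctions : SubMulAction (Perm α)ᵈᵐᵃ (α → ι) where
  carrier := {f | Surjective f}
  smul_mem' c _ hf := hf.comp (DomMulAct.mk.symm c).surjective

variable {α ι}

lemma fiberCard_smul (c : (Perm α)ᵈᵐᵃ) (f : α → ι) : fiberCard (c • f) = fiberCard f :=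
  fiberCard_comp_perm f (DomMulAct.mk.symm c)

noncomputable def orbitEquivCompositions [Finite α] [Fintype ι] :
    orbitRel.Quotient (Perm α)ᵈᵐᵃ (surjectiveFunctions α ι) ≃
      {a : ι → ℕ // (∀ i, 0 < a i) ∧ ∑ i, a i = Nat.card α} := by
  refine .ofBijective (Quotient.lift (fun f => ⟨fiberCard f.1,
      surjective_iff_forall_fiberCard_pos.mp f.2, sum_fiberCard f.1⟩) ?_) ⟨?_, ?_⟩
  · rintro _ g ⟨c, rfl⟩
    exact Subtype.ext (fiberCard_smul c g.1)
  · rintro ⟨f⟩ ⟨g⟩ h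
    obtain ⟨σ, hσ⟩ := exists_perm_comp_eq_of_fiberCard_eq (congrArg Subtype.val h)
    exact Quotient.sound ⟨DomMulAct.mk σ, Subtype.ext hσ⟩
  · rintro ⟨a, ha, hsum⟩
    obtain ⟨f, rfl⟩ := exists_fiberCard_eq a hsum
    exact ⟨⟦⟨f, surjective_iff_forall_fiberCard_pos.mpr ha⟩⟧, rfl⟩

lemma sum_card_invariant_surjective [Fintype α] [DecidableEq α] [Fintype ι] :
    ∑ σ : Perm α, Nat.card {f : α → ι // Surjective f ∧ f ∘ σ = f} =
      Nat.card {a : ι → ℕ // (∀ i, 0 < a i) ∧ ∑ i, a i = Fintype.card α} *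
        (Fintype.card α)! := by
  classical
  let : Fintype (Perm α)ᵈᵐᵃ := .ofEquiv _ DomMulAct.mk
  have fixed (σ : Perm α) : fixedBy (surjectiveFunctions α ι) (DomMulAct.mk σ) ≃
      {f : α → ι // Surjective f ∧ f ∘ σ = f} :=
    (subtypeEquivRight fun _ => Subtype.ext_iff).trans
      (subtypeSubtypeEquivSubtypeInter _ fun f => f ∘ σ = f)
  have burnside := sum_card_fixedBy_eq_card_orbits_mul_card_group (Perm α)ᵈᵐᵃ
    (surjectiveFunctions α ι)
  rw [← Fintype.sum_equiv DomMulAct.mk _ _ fun σ => Fintype.card_congr (fixed σ).symm,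
    Fintype.card_congr (DomMulAct.mk (M := Perm α)).symm, Fintype.card_perm,
    ← Nat.card_eq_fintype_card, Nat.card_congr orbitEquivCompositions,
    Nat.card_eq_fintype_card (α := α)] at burnside
  simpa only [Nat.card_eq_fintype_card] using burnside

end Burnside

lemma card_positive_compositions {ι : Type*} [Fintype ι] [DecidableEq ι] {n : ℕ}
    (hι : 1 ≤ Fintype.card ι) (hn : Fintype.card ι ≤ n) :
    Nat.card {a : ι → ℕ // (∀ i, 0 < a i) ∧ ∑ i, a i = n} =
      (n - 1).choose (Fintype.card ι - 1) := by
  set k := Fintype.card ι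
  have shift : {a : ι → ℕ // (∀ i, 0 < a i) ∧ ∑ i, a i = n} ≃
      {b : ι → ℕ // ∑ i, b i = n - k} :=
    { toFun a := ⟨fun i => a.1 i - 1, by
        rw [sum_tsub_distrib _ fun i _ => a.2.1 i, a.2.2]; simp [k]⟩
      invFun b := ⟨fun i => b.1 i + 1, fun i => Nat.succ_pos _, by
        rw [sum_add_distrib, b.2]; simp [k]; omega⟩
      left_inv a := Subtype.ext <| funext fun i => Nat.sub_add_cancel (a.2.1 i)
      right_inv b := Subtype.ext <| funext fun i => Nat.add_sub_cancel _ _ }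
  rw [Nat.card_congr (shift.trans (Sym.equivNatSumOfFintype ι (n - k)).symm),
    Nat.card_eq_fintype_card, Sym.card_sym_eq_choose, show k + (n - k) - 1 = n - 1 by omega]
  exact Nat.choose_symm_of_eq_add (by omega)

lemma card_invariant_surjective_fin {n : ℕ} (k : ℕ) (σ : Perm (Fin n)) :
    Nat.card {f : Fin n → Fin k // Surjective f ∧ f ∘ σ = f} =
      stirlingSecond (cycleCount σ) k * k ! := by
  rw [Nat.card_congr (Perm.invariantSurjectiveEquiv σ), card_surjective, Fintype.card_fin,
    cycleCount_eq_card_quotient]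

/-- For `1 ≤ k ≤ n`, summing the joint `(nsb, nse)` distribution of
ordered partitions of `[n]` into `k` nonempty lists over all `0 ≤ i ≤ k-1` and
`0 ≤ j ≤ n-k` yields the total count:
`∑_{j=0}^{n-k} ∑_{i=0}^{k-1} c(n,n-j) S(n-j,k) c(k,k-i) = n! C(n-1,k-1)`. -/
theorem sum_joint_distribution_eq_total (n k : ℕ) (hk : 1 ≤ k) (hkn : k ≤ n) :
    ∑ j ∈ Finset.range (n - k + 1), ∑ i ∈ Finset.range k,
        stirlingFirst n (n - j) * stirlingSecond (n - j) k * stirlingFirst k (k - i) =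
      Nat.factorial n * Nat.choose (n - 1) (k - 1) := by
  have : NeZero k := ⟨by omega⟩
  calc _ = ∑ m ∈ range (n + 1), stirlingFirst n m * (stirlingSecond m k * k !) := by
        simp_rw [← mul_sum, sum_range_stirlingFirst_sub, mul_assoc]
        exact sum_range_sub_eq_sum_range hkn
          (fun m => stirlingFirst n m * (stirlingSecond m k * k !))
          fun m hm => by simp [stirlingSecond_eq_zero_of_lt hm]
    _ = ∑ σ : Perm (Fin n), Nat.card {f : Fin n → Fin k // Surjective f ∧ f ∘ σ = f} := by
        simp_rw [sum_stirlingFirst_mul, card_invariant_surjective_fin]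
    _ = n ! * (n - 1).choose (k - 1) := by
        rw [sum_card_invariant_surjective, card_positive_compositions] <;> simp [mul_comm, *]
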